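/- Uniform Gronwall lemma: let y, a, b be nonnegative locally integrable functions on (t₀,∞), y locally absolutely continuous, with y'(t) ≤ a(t) + b(t)y(t) for t ≥ t₀, and suppose for some r > 0 and constants k₁,k₂,k₃: ∫_t^{t+r} a ≤ k₁, ∫_t^{t+r} b ≤ k₂, ∫_t^{t+r} y ≤ k₃ for all t ≥ t₀. Then y(t+r) ≤ (k₃/r + k₁) e^{k₂} for all t ≥ t₀. -/

import Mathlib

/-!
Gronwall with a merely integrable coefficient `b`: on an interval `[u, v]` with `∫ b ≤ η < 1`,
evaluating `y w - y u ≤ ∫ a + ∫ b y` at a maximum point `w` of `y` gives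
`y v ≤ (y u + ∫ a) / (1 - η)`. Cutting `[s, T]` into `N` pieces that each carry `K / N` of the
mass `K = ∫_s^T b` and letting `N → ∞` gives `y T ≤ (y s + ∫_s^T a) e^K`, since
`(1 - K / N)^{-N} → e^K`. Integrating this over the starting point `s ∈ [t, t + r]` replaces `y s`
by the mean of `y` over the window, which is at most `k₃ / r`.
-/

open MeasureTheory Set Filter Topology

structure LinearDiffIneqOn (y y' a b : ℝ → ℝ) (s T : ℝ) : Prop where
  continuousOn : ContinuousOn y (Icc s T)
  hasDerivWithinAt : ∀ x ∈ Ioo s T, HasDerivWithinAt y (y' x) (Ioi x) x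
  deriv_le : ∀ x ∈ Ioo s T, y' x ≤ a x + b x * y x
  nonneg : ∀ x ∈ Icc s T, 0 ≤ y x
  nonneg_a : ∀ x ∈ Icc s T, 0 ≤ a x
  nonneg_b : ∀ x ∈ Icc s T, 0 ≤ b x
  intervalIntegrable_a : IntervalIntegrable a volume s T
  intervalIntegrable_b : IntervalIntegrable b volume s T

theorem intervalIntegral.integral_mono_interval_of_nonnegOn {f : ℝ → ℝ} {s T u v : ℝ}
    (hsu : s ≤ u) (huv : u ≤ v) (hvT : v ≤ T) (hf : ∀ x ∈ Icc s T, 0 ≤ f x)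
    (hfi : IntervalIntegrable f volume s T) :
    ∫ x in u..v, f x ≤ ∫ x in s..T, f x :=
  intervalIntegral.integral_mono_interval hsu huv hvT
    ((ae_restrict_iff' measurableSet_Ioc).2 (ae_of_all _ fun x hx ↦ hf x (Ioc_subset_Icc_self hx)))
    hfi

theorem Real.tendsto_inv_one_sub_div_pow_exp (K : ℝ) :
    Tendsto (fun N : ℕ ↦ ((1 - K / N)⁻¹) ^ N) atTop (𝓝 (Real.exp K)) := by
  have h := (Real.tendsto_one_add_div_pow_exp (-K)).inv₀ (Real.exp_ne_zero _)
  rw [← Real.exp_neg, neg_neg] at h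
  refine h.congr fun N ↦ ?_
  rw [inv_pow, neg_div, ← sub_eq_add_neg]

namespace LinearDiffIneqOn

variable {y y' a b : ℝ → ℝ} {s T : ℝ}

theorem mono (h : LinearDiffIneqOn y y' a b s T) {s' T' : ℝ} (hs : s ≤ s') (hsT : s' ≤ T')
    (hT : T' ≤ T) : LinearDiffIneqOn y y' a b s' T' := by
  have hIcc : Icc s' T' ⊆ Icc s T := Icc_subset_Icc hs hT
  have hIoo : Ioo s' T' ⊆ Ioo s T := Ioo_subset_Ioo hs hT
  have huIcc : uIcc s' T' ⊆ uIcc s T := by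
    rwa [uIcc_of_le hsT, uIcc_of_le (hs.trans (hsT.trans hT))]
  exact
    { continuousOn := h.continuousOn.mono hIcc
      hasDerivWithinAt := fun x hx ↦ h.hasDerivWithinAt x (hIoo hx)
      deriv_le := fun x hx ↦ h.deriv_le x (hIoo hx)
      nonneg := fun x hx ↦ h.nonneg x (hIcc hx)
      nonneg_a := fun x hx ↦ h.nonneg_a x (hIcc hx)
      nonneg_b := fun x hx ↦ h.nonneg_b x (hIcc hx)
      intervalIntegrable_a := h.intervalIntegrable_a.mono_set huIcc
      intervalIntegrable_b := h.intervalIntegrable_b.mono_set huIcc }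

theorem le_mul_inv_one_sub {u v η : ℝ} (h : LinearDiffIneqOn y y' a b u v) (huv : u ≤ v)
    (hb : ∫ x in u..v, b x ≤ η) (hη : η < 1) :
    y v ≤ (y u + ∫ x in u..v, a x) * (1 - η)⁻¹ := by
  obtain ⟨w, hw, hmax⟩ := isCompact_Icc.exists_isMaxOn (nonempty_Icc.2 huv) h.continuousOn
  have hw' := h.mono le_rfl hw.1 hw.2
  have hby : IntervalIntegrable (fun x ↦ b x * y x) volume u w :=
    hw'.intervalIntegrable_b.mul_continuousOn (by rw [uIcc_of_le hw.1]; exact hw'.continuousOn)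
  have hFTC : y w - y u ≤ (∫ x in u..w, a x) + ∫ x in u..w, b x * y x := by
    rw [← intervalIntegral.integral_add hw'.intervalIntegrable_a hby]
    refine intervalIntegral.sub_le_integral_of_hasDeriv_right_of_le hw.1 hw'.continuousOn
      hw'.hasDerivWithinAt ?_ hw'.deriv_le
    exact (intervalIntegrable_iff_integrableOn_Icc_of_le hw.1).1
      (hw'.intervalIntegrable_a.add hby)
  have ha : ∫ x in u..w, a x ≤ ∫ x in u..v, a x :=
    intervalIntegral.integral_mono_interval_of_nonnegOn le_rfl hw.1 hw.2 h.nonneg_a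
      h.intervalIntegrable_a
  have hby_le : ∫ x in u..w, b x * y x ≤ η * y w :=
    calc ∫ x in u..w, b x * y x ≤ ∫ x in u..w, b x * y w :=
          intervalIntegral.integral_mono_on hw.1 hby (hw'.intervalIntegrable_b.mul_const _)
            fun x hx ↦ mul_le_mul_of_nonneg_left (hmax (Icc_subset_Icc le_rfl hw.2 hx))
              (hw'.nonneg_b x hx)
      _ = (∫ x in u..w, b x) * y w := intervalIntegral.integral_mul_const _ _
      _ ≤ η * y w := by
          gcongr
          · exact h.nonneg w hw
          · exact (intervalIntegral.integral_mono_interval_of_nonnegOn le_rfl hw.1 hw.2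
              h.nonneg_b h.intervalIntegrable_b).trans hb
  calc y v ≤ y w := hmax (right_mem_Icc.2 huv)
    _ ≤ (y u + ∫ x in u..v, a x) * (1 - η)⁻¹ := by
      rw [← div_eq_mul_inv, le_div_iff₀ (by linarith)]
      linarith

theorem le_mul_inv_one_sub_pow {η : ℝ} (hη0 : 0 ≤ η) (hη1 : η < 1) (N : ℕ)
    (h : LinearDiffIneqOn y y' a b s T) (hsT : s ≤ T) (hb : ∫ x in s..T, b x ≤ N * η) :
    y T ≤ (y s + ∫ x in s..T, a x) * (1 - η)⁻¹ ^ N := by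
  induction N generalizing T with
  | zero => simpa using h.le_mul_inv_one_sub hsT (by simpa using hb) zero_lt_one
  | succ N ih =>
    set B := ∫ x in s..T, b x
    have hB0 : 0 ≤ B := intervalIntegral.integral_nonneg hsT h.nonneg_b
    -- `v` leaves at most `η` of the mass of `b` on `[v, T]` and at most `N η` on `[s, v]`.
    obtain ⟨v, hv, hBv⟩ : ∃ v ∈ Icc s T, ∫ x in s..v, b x = max (B - η) 0 := by
      refine intermediate_value_Icc hsT ?_ ?_
      · have := intervalIntegral.continuousOn_primitive_interval' h.intervalIntegrable_b
          left_mem_uIcc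
        rwa [uIcc_of_le hsT] at this
      · simp only [intervalIntegral.integral_same]
        exact ⟨le_max_right _ _, max_le (by linarith) hB0⟩
    have hsv := h.mono le_rfl hv.1 hv.2
    have hvT := h.mono hv.1 hv.2 le_rfl
    have hb_split : (∫ x in s..v, b x) + ∫ x in v..T, b x = B :=
      intervalIntegral.integral_add_adjacent_intervals hsv.intervalIntegrable_b
        hvT.intervalIntegrable_b
    have ha_split : (∫ x in s..v, a x) + ∫ x in v..T, a x = ∫ x in s..T, a x :=
      intervalIntegral.integral_add_adjacent_intervals hsv.intervalIntegrable_a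
        hvT.intervalIntegrable_a
    have hys : y v ≤ (y s + ∫ x in s..v, a x) * (1 - η)⁻¹ ^ N := by
      refine ih hsv hv.1 ?_
      rw [hBv]
      push_cast at hb
      exact max_le (by linarith) (by positivity)
    have hyT : y T ≤ (y v + ∫ x in v..T, a x) * (1 - η)⁻¹ :=
      hvT.le_mul_inv_one_sub hv.2 (by linarith [le_max_left (B - η) 0]) hη1
    have hc : 1 ≤ (1 - η)⁻¹ := one_le_inv₀ (by linarith) |>.2 (by linarith)
    have haT : 0 ≤ ∫ x in v..T, a x := intervalIntegral.integral_nonneg hv.2 hvT.nonneg_a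
    calc y T ≤ ((y s + ∫ x in s..v, a x) * (1 - η)⁻¹ ^ N + ∫ x in v..T, a x) * (1 - η)⁻¹ :=
          hyT.trans (by gcongr)
      _ ≤ ((y s + ∫ x in s..v, a x) * (1 - η)⁻¹ ^ N
            + (∫ x in v..T, a x) * (1 - η)⁻¹ ^ N) * (1 - η)⁻¹ := by
          gcongr
          exact le_mul_of_one_le_right haT (one_le_pow₀ hc)
      _ = (y s + ∫ x in s..T, a x) * (1 - η)⁻¹ ^ (N + 1) := by
          rw [← ha_split]; ring

theorem le_mul_exp (h : LinearDiffIneqOn y y' a b s T) (hsT : s ≤ T) :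
    y T ≤ (y s + ∫ x in s..T, a x) * Real.exp (∫ x in s..T, b x) := by
  set K := ∫ x in s..T, b x
  have hK : 0 ≤ K := intervalIntegral.integral_nonneg hsT h.nonneg_b
  refine ge_of_tendsto ((Real.tendsto_inv_one_sub_div_pow_exp K).const_mul _)
    ((eventually_gt_atTop ⌈K⌉₊).mono fun N hN ↦ ?_)
  have hKN : K < N := Nat.lt_of_ceil_lt hN
  have hN : (N : ℝ) ≠ 0 := (hK.trans_lt hKN).ne'
  exact h.le_mul_inv_one_sub_pow (by positivity) ((div_lt_one (hK.trans_lt hKN)).2 hKN) N hsT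
    (mul_div_cancel₀ K hN).ge

theorem le_div_add_mul_exp_of_integral_le {t r k₁ k₂ k₃ : ℝ}
    (h : LinearDiffIneqOn y y' a b t (t + r)) (hr : 0 < r)
    (hyi : IntervalIntegrable y volume t (t + r))
    (hA : ∫ x in t..t + r, a x ≤ k₁) (hB : ∫ x in t..t + r, b x ≤ k₂)
    (hY : ∫ x in t..t + r, y x ≤ k₃) :
    y (t + r) ≤ (k₃ / r + k₁) * Real.exp k₂ := by
  have htT : t ≤ t + r := by linarith
  have hpoint : ∀ s ∈ Icc t (t + r), y (t + r) ≤ (y s + k₁) * Real.exp k₂ := by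
    intro s hs
    have hsT := h.mono hs.1 hs.2 le_rfl
    calc y (t + r) ≤ (y s + ∫ x in s..t + r, a x) * Real.exp (∫ x in s..t + r, b x) :=
          hsT.le_mul_exp hs.2
      _ ≤ (y s + k₁) * Real.exp k₂ := by
          have hAs := (intervalIntegral.integral_mono_interval_of_nonnegOn hs.1 hs.2 le_rfl
            h.nonneg_a h.intervalIntegrable_a).trans hA
          have hBs := (intervalIntegral.integral_mono_interval_of_nonnegOn hs.1 hs.2 le_rfl
            h.nonneg_b h.intervalIntegrable_b).trans hB
          have hA0 : 0 ≤ ∫ x in s..t + r, a x :=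
            intervalIntegral.integral_nonneg hs.2 hsT.nonneg_a
          have hys := h.nonneg s hs
          exact mul_le_mul (by linarith) (Real.exp_le_exp.2 hBs) (Real.exp_pos _).le
            (by linarith)
  have hmean := intervalIntegral.integral_mono_on htT intervalIntegrable_const
    ((hyi.add intervalIntegrable_const).mul_const _) hpoint
  rw [intervalIntegral.integral_const, intervalIntegral.integral_mul_const,
    intervalIntegral.integral_add hyi intervalIntegrable_const,
    intervalIntegral.integral_const] at hmean
  simp only [add_sub_cancel_left, smul_eq_mul] at hmean
  rw [div_add' _ _ _ hr.ne', div_mul_eq_mul_div, le_div_iff₀ hr]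
  nlinarith [Real.exp_pos k₂]

end LinearDiffIneqOn

/-- Uniform Gronwall lemma: if `y' ≤ a + b y` on `(t₀,∞)` with
`∫_t^{t+r} a ≤ k₁`, `∫_t^{t+r} b ≤ k₂`, `∫_t^{t+r} y ≤ k₃` for all `t ≥ t₀`, then
`y(t+r) ≤ (k₃/r + k₁) e^{k₂}`. -/
theorem stmt_19 (t₀ r k₁ k₂ k₃ : ℝ) (hr : 0 < r)
    (y y' a b : ℝ → ℝ)
    (ha0 : ∀ t ≥ t₀, 0 ≤ a t) (hb0 : ∀ t ≥ t₀, 0 ≤ b t) (hy0 : ∀ t ≥ t₀, 0 ≤ y t)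
    (hint : ∀ t ≥ t₀, IntervalIntegrable a volume t (t + r) ∧
      IntervalIntegrable b volume t (t + r) ∧ IntervalIntegrable y volume t (t + r))
    (hderiv : ∀ t ≥ t₀, HasDerivAt y (y' t) t)
    (hineq : ∀ t ≥ t₀, y' t ≤ a t + b t * y t)
    (hA : ∀ t ≥ t₀, (∫ s in t..(t + r), a s) ≤ k₁)
    (hB : ∀ t ≥ t₀, (∫ s in t..(t + r), b s) ≤ k₂)
    (hY : ∀ t ≥ t₀, (∫ s in t..(t + r), y s) ≤ k₃) :
    ∀ t ≥ t₀, y (t + r) ≤ (k₃ / r + k₁) * Real.exp k₂ := by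
  intro t ht
  have hge : ∀ x ∈ Icc t (t + r), x ≥ t₀ := fun x hx ↦ ht.trans hx.1
  obtain ⟨hai, hbi, hyi⟩ := hint t ht
  have hwindow : LinearDiffIneqOn y y' a b t (t + r) :=
    { continuousOn := fun x hx ↦ (hderiv x (hge x hx)).continuousAt.continuousWithinAt
      hasDerivWithinAt := fun x hx ↦ (hderiv x (hge x (Ioo_subset_Icc_self hx))).hasDerivWithinAt
      deriv_le := fun x hx ↦ hineq x (hge x (Ioo_subset_Icc_self hx))
      nonneg := fun x hx ↦ hy0 x (hge x hx)
      nonneg_a := fun x hx ↦ ha0 x (hge x hx)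
      nonneg_b := fun x hx ↦ hb0 x (hge x hx)
      intervalIntegrable_a := hai
      intervalIntegrable_b := hbi }
  exact hwindow.le_div_add_mul_exp_of_integral_le hr hyi (hA t ht) (hB t ht) (hY t ht)
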